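/- arXiv:2508.02010 — 2 statements merged into one kernel-verified Lean document; each statement's English description precedes it below -/
import Mathlib

section
/- Let Γ be a connected (G,2)-distance-transitive graph of valency k ≥ 2 with gcd(c₂, k-1) = 1. Then either Γ has girth 3 or Γ is (G,2)-arc-transitive. -/
/-!
In a triangle-free graph every 2-arc `(u, v, w)` ends at distance 2 from `u`, so counting the
2-arcs starting at `u` by their middle and by their last vertex gives `k (k - 1) = k₂ c₂`, where
`k₂` is the number of vertices at distance 2 from `u`. The orbit of one such 2-arc under the
stabilizer `G_u` is counted in the same way: as `G_u` is transitive on `Γ(u)` and on `Γ₂(u)`, the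
orbit has `a` arcs through each neighbour of `u` and `b` arcs ending at each vertex of `Γ₂(u)`, so
`k a = k₂ b` and hence `a c₂ = (k - 1) b`. Since `c₂` is prime to `k - 1` and `1 ≤ a ≤ k - 1`, this
forces `a = k - 1`: the orbit contains every 2-arc starting at `u`. Vertex-transitivity does the
rest.
-/

open Finset

namespace Nat

lemma eq_of_le_of_mul_eq_mul_of_coprime {a m b c : ℕ} (ha : 0 < a) (ham : a ≤ m)
    (h : a * c = m * b) (hcm : Nat.Coprime c m) : a = m :=
  ham.antisymm (Nat.le_of_dvd ha (hcm.symm.dvd_of_dvd_mul_right ⟨b, h⟩))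

end Nat

namespace Finset

variable {G α β : Type*} [Group G] [MulAction G α] [MulAction G β] {r : α → β → Prop}
  [∀ a b, Decidable (r a b)] {s : Finset α} {t : Finset β}

lemma card_bipartiteAbove_smul (ht : ∀ g : G, ∀ b ∈ t, g • b ∈ t)
    (hr : ∀ (g : G) a b, r (g • a) (g • b) ↔ r a b) (g : G) (a : α) :
    #(t.bipartiteAbove r (g • a)) = #(t.bipartiteAbove r a) := by
  refine card_nbij' (g⁻¹ • ·) (g • ·) ?_ ?_ (fun _ _ ↦ smul_inv_smul g _)
    (fun _ _ ↦ inv_smul_smul g _) <;> intro b <;>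
    simp only [coe_bipartiteAbove, Set.mem_ofPred_eq]
  · rintro ⟨hb, hab⟩
    exact ⟨ht _ b hb, by rwa [← hr g, smul_inv_smul]⟩
  · rintro ⟨hb, hab⟩
    exact ⟨ht g b hb, (hr g a b).mpr hab⟩

lemma card_bipartiteBelow_smul (hs : ∀ g : G, ∀ a ∈ s, g • a ∈ s)
    (hr : ∀ (g : G) a b, r (g • a) (g • b) ↔ r a b) (g : G) (b : β) :
    #(s.bipartiteBelow r (g • b)) = #(s.bipartiteBelow r b) :=
  card_bipartiteAbove_smul (r := Function.swap r) hs (fun g b a ↦ hr g a b) g b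

end Finset

namespace SimpleGraph

variable {V W : Type*} {Γ : SimpleGraph V} {Γ' : SimpleGraph W}

lemma egirth_eq_three_of_not_cliqueFree (h : ¬Γ.CliqueFree 3) : Γ.egirth = 3 := by
  obtain ⟨u, w, hw, hlen⟩ := is3Clique_iff_exists_cycle_length_three.mp (by
    simpa [CliqueFree] using h)
  exact le_antisymm ((egirth_le_length hw).trans (by simp [hlen])) Γ.three_le_egirth

lemma CliqueFree.dist_eq_two (hΓ : Γ.CliqueFree 3) {u v w : V} (huv : Γ.Adj u v)
    (hvw : Γ.Adj v w) (huw : u ≠ w) : Γ.dist u w = 2 := by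
  classical
  have hnadj : ¬Γ.Adj u w := fun huw' ↦
    hΓ {u, v, w} (is3Clique_triple_iff.mpr ⟨huv, huw', hvw⟩)
  rw [dist, edist_eq_two_iff.mpr ⟨huw, hnadj, v, huv, hvw.symm⟩]
  rfl

lemma Hom.edist_le (f : Γ →g Γ') (u v : V) : Γ'.edist (f u) (f v) ≤ Γ.edist u v :=
  le_iInf fun p ↦ by simpa using (p.map f).edist_le

lemma Iso.edist_eq (f : Γ ≃g Γ') (u v : V) : Γ'.edist (f u) (f v) = Γ.edist u v :=
  (Hom.edist_le f.toHom u v).antisymm <| by simpa using Hom.edist_le f.symm.toHom (f u) (f v)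

lemma Iso.dist_eq (f : Γ ≃g Γ') (u v : V) : Γ'.dist (f u) (f v) = Γ.dist u v := by
  rw [dist, dist, f.edist_eq]

lemma dist_smul {G : Type*} [Group G] [MulAction G V]
    (haut : ∀ (g : G) u v, Γ.Adj (g • u) (g • v) ↔ Γ.Adj u v) (g : G) (u v : V) :
    Γ.dist (g • u) (g • v) = Γ.dist u v :=
  Iso.dist_eq ⟨MulAction.toPerm g, haut g _ _⟩ u v

section Counting

variable [Fintype V] [DecidableEq V] [DecidableRel Γ.Adj] {k c₂ : ℕ} {u : V}
  {G : Type*} [Group G] [MulAction G V]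

lemma card_bipartiteAbove_adj (hΓ : Γ.CliqueFree 3) (hreg : Γ.IsRegularOfDegree k) {v : V}
    (huv : Γ.Adj u v) :
    #(({w | Γ.dist u w = 2} : Finset V).bipartiteAbove Γ.Adj v) = k - 1 := by
  have : ({w | Γ.dist u w = 2} : Finset V).bipartiteAbove Γ.Adj v =
      (Γ.neighborFinset v).erase u := by
    ext w
    simp only [mem_bipartiteAbove, mem_filter_univ, mem_erase, mem_neighborFinset]
    constructor
    · rintro ⟨hw, hvw⟩
      exact ⟨by rintro rfl; simp at hw, hvw⟩
    · rintro ⟨hwu, hvw⟩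
      exact ⟨hΓ.dist_eq_two huv hvw (Ne.symm hwu), hvw⟩
  rw [this, card_erase_of_mem (by simpa using huv.symm), card_neighborFinset_eq_degree, hreg v]

lemma card_dist_eq_two_mul (hΓ : Γ.CliqueFree 3) (hreg : Γ.IsRegularOfDegree k)
    (hc₂ : ∀ w, Γ.dist u w = 2 → (Γ.commonNeighbors u w).ncard = c₂) :
    #{w | Γ.dist u w = 2} * c₂ = k * (k - 1) := by
  have hbelow : ∀ w ∈ ({w | Γ.dist u w = 2} : Finset V),
      #((Γ.neighborFinset u).bipartiteBelow Γ.Adj w) = c₂ := by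
    intro w hw
    rw [← hc₂ w (by simpa using hw), ← Set.ncard_coe_finset]
    congr 1
    ext x
    simp [mem_commonNeighbors, adj_comm]
  rw [← card_mul_eq_card_mul Γ.Adj (fun v hv ↦ card_bipartiteAbove_adj hΓ hreg
    ((mem_neighborFinset _ _ _).mp hv)) hbelow, card_neighborFinset_eq_degree, hreg u]

lemma bipartiteAbove_eq_adj_of_coprime (hΓ : Γ.CliqueFree 3) (hreg : Γ.IsRegularOfDegree k)
    (hc₂ : ∀ w, Γ.dist u w = 2 → (Γ.commonNeighbors u w).ncard = c₂)
    (hcop : Nat.Coprime c₂ (k - 1)) {r : V → V → Prop} [DecidableRel r]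
    (hadj : ∀ x y, r x y → Γ.Adj x y) {v w : V} (huv : Γ.Adj u v) (hw : Γ.dist u w = 2)
    (hvw : r v w)
    (habove : ∀ x ∈ Γ.neighborFinset u, #(({y | Γ.dist u y = 2} : Finset V).bipartiteAbove r x)
      = #(({y | Γ.dist u y = 2} : Finset V).bipartiteAbove r v))
    (hbelow : ∀ y ∈ ({y | Γ.dist u y = 2} : Finset V),
      #((Γ.neighborFinset u).bipartiteBelow r y) = #((Γ.neighborFinset u).bipartiteBelow r w))
    {x : V} (hux : Γ.Adj u x) :
    ({y | Γ.dist u y = 2} : Finset V).bipartiteAbove r x =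
      ({y | Γ.dist u y = 2} : Finset V).bipartiteAbove Γ.Adj x := by
  set D : Finset V := {y | Γ.dist u y = 2}
  have hsub : ∀ x, D.bipartiteAbove r x ⊆ D.bipartiteAbove Γ.Adj x := fun x y hy ↦ by
    rw [mem_bipartiteAbove] at hy ⊢
    exact ⟨hy.1, hadj x y hy.2⟩
  have hN : #(Γ.neighborFinset u) = k := (card_neighborFinset_eq_degree Γ u).trans (hreg u)
  have hk : 0 < k := hN ▸ card_pos.mpr ⟨v, (mem_neighborFinset _ _ _).mpr huv⟩
  have hcount := card_mul_eq_card_mul r habove hbelow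
  have harcs := card_dist_eq_two_mul hΓ hreg hc₂
  have hv : #(D.bipartiteAbove r v) = k - 1 := by
    set b := #((Γ.neighborFinset u).bipartiteBelow r w)
    have hpos : 0 < #(D.bipartiteAbove r v) :=
      card_pos.mpr ⟨w, (mem_bipartiteAbove _).mpr ⟨by simpa [D] using hw, hvw⟩⟩
    have hle : #(D.bipartiteAbove r v) ≤ k - 1 :=
      (card_le_card (hsub v)).trans (card_bipartiteAbove_adj hΓ hreg huv).le
    have heq : #(D.bipartiteAbove r v) * c₂ = (k - 1) * b := by
      refine Nat.eq_of_mul_eq_mul_left hk ?_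
      rw [hN] at hcount
      linear_combination c₂ * hcount + b * harcs
    exact Nat.eq_of_le_of_mul_eq_mul_of_coprime hpos hle heq hcop
  refine eq_of_subset_of_card_le (hsub x) ?_
  rw [habove x ((mem_neighborFinset _ _ _).mpr hux), hv, card_bipartiteAbove_adj hΓ hreg hux]

open MulAction in
lemma exists_smul_eq_of_coprime (haut : ∀ (g : G) u v, Γ.Adj (g • u) (g • v) ↔ Γ.Adj u v)
    (hΓ : Γ.CliqueFree 3) (hreg : Γ.IsRegularOfDegree k)
    (hc₂ : ∀ w, Γ.dist u w = 2 → (Γ.commonNeighbors u w).ncard = c₂)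
    (hcop : Nat.Coprime c₂ (k - 1))
    (hs1 : ∀ v w, Γ.Adj u v → Γ.Adj u w → ∃ g : G, g • u = u ∧ g • v = w)
    (hs2 : ∀ v w, Γ.dist u v = 2 → Γ.dist u w = 2 → ∃ g : G, g • u = u ∧ g • v = w)
    {v w v' w' : V} (huv : Γ.Adj u v) (hvw : Γ.Adj v w) (huw : u ≠ w)
    (huv' : Γ.Adj u v') (hvw' : Γ.Adj v' w') (huw' : u ≠ w') :
    ∃ g : G, g • u = u ∧ g • v = v' ∧ g • w = w' := by
  classical
  set H := stabilizer G u
  set N := Γ.neighborFinset u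
  set D : Finset V := {x | Γ.dist u x = 2}
  let r : V → V → Prop := fun x y ↦ (x, y) ∈ orbit H (v, w)
  have hr : ∀ (h : H) x y, r (h • x) (h • y) ↔ r x y := fun h x y ↦ by
    change h • (x, y) ∈ orbit H (v, w) ↔ _
    rw [← orbit_eq_iff, orbit_smul, orbit_eq_iff]
  have hadj : ∀ x y, r x y → Γ.Adj x y := by
    rintro x y ⟨h, hxy⟩
    obtain ⟨rfl, rfl⟩ := Prod.mk.inj (show (h • v, h • w) = (x, y) from hxy)
    exact (haut h v w).mpr hvw
  have hN : ∀ h : H, ∀ x ∈ N, h • x ∈ N := fun h x hx ↦ by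
    simpa [N, Subgroup.smul_def, ← haut (h : G) u x, mem_stabilizer_iff.mp h.2] using hx
  have hD : ∀ h : H, ∀ x ∈ D, h • x ∈ D := fun h x hx ↦ by
    simpa [D, Subgroup.smul_def, ← dist_smul haut (h : G) u x, mem_stabilizer_iff.mp h.2] using hx
  have habove : ∀ x ∈ N, #(D.bipartiteAbove r x) = #(D.bipartiteAbove r v) := fun x hx ↦ by
    obtain ⟨g, hgu, rfl⟩ := hs1 v x huv ((mem_neighborFinset _ _ _).mp hx)
    exact card_bipartiteAbove_smul hD hr ⟨g, hgu⟩ v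
  have hw : Γ.dist u w = 2 := hΓ.dist_eq_two huv hvw huw
  have hbelow : ∀ y ∈ D, #(N.bipartiteBelow r y) = #(N.bipartiteBelow r w) := fun y hy ↦ by
    obtain ⟨g, hgu, rfl⟩ := hs2 w y hw (by simpa [D] using hy)
    exact card_bipartiteBelow_smul hN hr ⟨g, hgu⟩ w
  have hw' : w' ∈ D.bipartiteAbove r v' := by
    rw [bipartiteAbove_eq_adj_of_coprime hΓ hreg hc₂ hcop hadj huv hw (mem_orbit_self _)
      habove hbelow huv', mem_bipartiteAbove]
    exact ⟨by simpa [D] using hΓ.dist_eq_two huv' hvw' huw', hvw'⟩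
  obtain ⟨⟨g, hgu⟩, hg⟩ := ((mem_bipartiteAbove _).mp hw').2
  obtain ⟨rfl, rfl⟩ := Prod.mk.inj (show (g • v, g • w) = (v', w') from hg)
  exact ⟨g, hgu, rfl, rfl⟩

end Counting

end SimpleGraph

theorem stmt9_general {V : Type*} [Fintype V] (Γ : SimpleGraph V) (G : Type*) [Group G]
    (φ : G →* Equiv.Perm V)
    (haut : ∀ (g : G) (u v : V), Γ.Adj (φ g u) (φ g v) ↔ Γ.Adj u v)
    (k c₂ : ℕ)
    (hreg : ∀ v, (Γ.neighborSet v).ncard = k)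
    (hc₂ : ∀ u w, Γ.dist u w = 2 → (Γ.neighborSet u ∩ Γ.neighborSet w).ncard = c₂)
    (hvt : ∀ u v : V, ∃ g : G, φ g u = v)
    (hs1 : ∀ u v w : V, Γ.Adj u v → Γ.Adj u w → ∃ g : G, φ g u = u ∧ φ g v = w)
    (hs2 : ∀ u v w : V, Γ.dist u v = 2 → Γ.dist u w = 2 → ∃ g : G, φ g u = u ∧ φ g v = w)
    (hcop : Nat.gcd c₂ (k - 1) = 1) :
    Γ.egirth = 3 ∨
    (∀ u v w u' v' w' : V, Γ.Adj u v → Γ.Adj v w → u ≠ w →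
      Γ.Adj u' v' → Γ.Adj v' w' → u' ≠ w' →
      ∃ g : G, φ g u = u' ∧ φ g v = v' ∧ φ g w = w') := by
  classical
  let := MulAction.compHom V φ
  by_cases hΓ : Γ.CliqueFree 3
  · right
    have hdeg : Γ.IsRegularOfDegree k := fun v ↦ by
      rw [← hreg v, Set.ncard_eq_toFinset_card']
      rfl
    intro u v w u' v' w' huv hvw huw hu'v' hv'w' hu'w'
    obtain ⟨g, rfl⟩ := hvt u u'
    obtain ⟨h, hhu, hhv, hhw⟩ := Γ.exists_smul_eq_of_coprime (u := g • u) haut hΓ hdeg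
      (hc₂ _) hcop (hs1 _) (hs2 _) ((haut g u v).mpr huv) ((haut g v w).mpr hvw)
      ((MulAction.injective g).ne huw) hu'v' hv'w' hu'w'
    exact ⟨h * g, (mul_smul h g u).trans hhu, (mul_smul h g v).trans hhv,
      (mul_smul h g w).trans hhw⟩
  · exact .inl (SimpleGraph.egirth_eq_three_of_not_cliqueFree hΓ)

/-- Let `Γ` be a connected `(G,2)`-distance-transitive graph of valency
`k ≥ 2` with `gcd(c₂, k - 1) = 1`. Then either `Γ` has girth `3` or `Γ` is
`(G,2)`-arc-transitive. -/
theorem stmt9 {V : Type*} [Fintype V] (Γ : SimpleGraph V) (G : Type*) [Group G]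
    (φ : G →* Equiv.Perm V)
    (haut : ∀ (g : G) (u v : V), Γ.Adj (φ g u) (φ g v) ↔ Γ.Adj u v)
    (k c₂ : ℕ) (hk : 2 ≤ k) (hconn : Γ.Connected)
    (hreg : ∀ v, (Γ.neighborSet v).ncard = k)
    (hc₂ : ∀ u w, Γ.dist u w = 2 → (Γ.neighborSet u ∩ Γ.neighborSet w).ncard = c₂)
    (hvt : ∀ u v : V, ∃ g : G, φ g u = v)
    (hs1 : ∀ u v w : V, Γ.Adj u v → Γ.Adj u w → ∃ g : G, φ g u = u ∧ φ g v = w)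
    (hs2 : ∀ u v w : V, Γ.dist u v = 2 → Γ.dist u w = 2 → ∃ g : G, φ g u = u ∧ φ g v = w)
    (hcop : Nat.gcd c₂ (k - 1) = 1) :
    Γ.egirth = 3 ∨
    (∀ u v w u' v' w' : V, Γ.Adj u v → Γ.Adj v w → u ≠ w →
      Γ.Adj u' v' → Γ.Adj v' w' → u' ≠ w' →
      ∃ g : G, φ g u = u' ∧ φ g v = v' ∧ φ g w = w') :=
  stmt9_general Γ G φ haut k c₂ hreg hc₂ hvt hs1 hs2 hcop
end

section
/- Let Γ be a connected 2-distance-transitive graph of valency k ≥ 3, diameter d ≥ 3, with intersection numbers b₁ = c₂ = k - 1. Then Γ is isomorphic to K_{k+1,k+1} minus a perfect matching. -/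
/-- `Γ` is 2-distance-transitive. -/
def TwoDistanceTransitive {V : Type*} (Γ : SimpleGraph V) : Prop :=
  (∀ u v : V, ∃ g : Γ ≃g Γ, g u = v) ∧
  (∀ u v w : V, Γ.Adj u v → Γ.Adj u w → ∃ g : Γ ≃g Γ, g u = u ∧ g v = w) ∧
  (∀ u v w : V, Γ.dist u v = 2 → Γ.dist u w = 2 → ∃ g : Γ ≃g Γ, g u = u ∧ g v = w)

/-- The complete bipartite graph `K_{n,n}` minus a perfect matching: vertices
`Fin n × Bool`, with `(a,i) ~ (b,j)` iff `a ≠ b` and `i ≠ j`. -/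
def KnnMinusMatching (n : ℕ) : SimpleGraph (Fin n × Bool) where
  Adj a b := a.1 ≠ b.1 ∧ a.2 ≠ b.2
  symm := ⟨fun _ _ h => ⟨Ne.symm h.1, Ne.symm h.2⟩⟩
  loopless := ⟨fun _ h => h.1 rfl⟩

/-! Fix a vertex `u`. Since `b₁ = k - 1`, every neighbour of a neighbour of `u`, other than `u`,
lies at distance 2 from `u`. Double counting the edges between `Γ(u)` and `Γ₂(u)` gives
`|Γ₂(u)| = k`, so non-adjacency between `Γ(u)` and `Γ₂(u)` is a perfect matching, and every
`v ∈ Γ₂(u)` has exactly one neighbour outside `Γ(u)`. For `k ≥ 3`, two vertices `v ≠ v'` of `Γ₂(u)`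
have a common neighbour, hence are at distance 2 and have `k - 1` common neighbours, of which at
most `k - 2` lie in `Γ(u)` because their partners are distinct: so all of `Γ₂(u)` shares one outer
neighbour `x`, and `Γ(x) = Γ₂(u)`. Then `{u} ∪ Γ₂(u)` and `{x} ∪ Γ(u)` are the two sides of
`K_{k+1,k+1}` minus the perfect matching formed by `u ↔ x` and the non-adjacent pairs. -/

open Finset

theorem Finset.existsUnique_not_of_card_filter_add_one {α : Type*} {s : Finset α} {p : α → Prop}
    [DecidablePred p] (h : #(s.filter p) + 1 = #s) : ∃! x ∈ s, ¬ p x := by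
  have hcard : #(s.filter fun x ↦ ¬ p x) = 1 := by
    have := card_filter_add_card_filter_not (s := s) p
    omega
  obtain ⟨a, ha⟩ := card_eq_one.mp hcard
  refine ⟨a, mem_filter.mp (ha ▸ mem_singleton_self a), fun x hx ↦ ?_⟩
  rw [← mem_singleton, ← ha]
  exact mem_filter.mpr hx

theorem Finset.existsUnique_mem_insert_of_not {α : Type*} [DecidableEq α] {s : Finset α}
    {p : α → Prop} {a : α} (ha : ¬ p a) (h : ∃! x ∈ s, p x) : ∃! x ∈ insert a s, p x := by
  obtain ⟨x, ⟨hxs, hx⟩, huniq⟩ := h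
  refine ⟨x, ⟨mem_insert_of_mem hxs, hx⟩, fun y ⟨hy, hpy⟩ ↦ ?_⟩
  rcases mem_insert.mp hy with rfl | hy
  · exact absurd hpy ha
  · exact huniq y ⟨hy, hpy⟩

theorem Finset.existsUnique_mem_insert_of_forall_not {α : Type*} [DecidableEq α] {s : Finset α}
    {p : α → Prop} {a : α} (ha : p a) (h : ∀ x ∈ s, ¬ p x) : ∃! x ∈ insert a s, p x :=
  ⟨a, ⟨mem_insert_self a s, ha⟩, fun y ⟨hy, hpy⟩ ↦
    (mem_insert.mp hy).resolve_right fun hys ↦ h y hys hpy⟩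

namespace SimpleGraph

variable {V : Type*} {Γ : SimpleGraph V}

theorem Preconnected.mem_of_adj_closed (h : Γ.Preconnected) {s : Set V}
    (hs : ∀ x y, x ∈ s → Γ.Adj x y → y ∈ s) {u : V} (hu : u ∈ s) (v : V) : v ∈ s := by
  obtain ⟨p⟩ := h u v
  induction p with
  | nil => exact hu
  | cons hadj _ ih => exact ih (hs _ _ hu hadj)

theorem nonempty_iso_knnMinusMatching_of_partition [DecidableEq V] {n : ℕ}
    {A B : Finset V} (hcover : ∀ y, y ∈ A ∨ y ∈ B) (hAB : Disjoint A B) (hA : #A = n)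
    (hA_adj : ∀ a ∈ A, ∀ y, Γ.Adj a y → y ∈ B) (hB_adj : ∀ b ∈ B, ∀ y, Γ.Adj b y → y ∈ A)
    (hmatchA : ∀ a ∈ A, ∃! b ∈ B, ¬ Γ.Adj a b) (hmatchB : ∀ b ∈ B, ∃! a ∈ A, ¬ Γ.Adj a b) :
    Nonempty (Γ ≃g KnnMinusMatching n) := by
  choose σ hσB hσ using fun a : A ↦ (hmatchA a a.2).exists
  have hσ_unique : ∀ a a' : A, σ a = σ a' → a = a' := fun a a' h ↦
    Subtype.ext <| (hmatchB (σ a) (hσB a)).unique ⟨a.2, hσ a⟩ ⟨a'.2, h ▸ hσ a'⟩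
  set e : Fin n ≃ A := (A.equivFinOfCardEq hA).symm
  let F : Fin n × Bool → V := fun p ↦ cond p.2 (σ (e p.1)) (e p.1)
  have hAB' := Finset.disjoint_left.mp hAB
  have hcross : ∀ i j, Γ.Adj (e i) (σ (e j)) ↔ i ≠ j := by
    refine fun i j ↦ ⟨fun h hij ↦ hσ (e j) (hij ▸ h), fun hij ↦ by_contra fun h ↦ hij ?_⟩
    exact e.injective <| Subtype.ext <|
      (hmatchB _ (hσB (e j))).unique ⟨(e i).2, h⟩ ⟨(e j).2, hσ (e j)⟩
  have hF_adj : ∀ p q, Γ.Adj (F p) (F q) ↔ (KnnMinusMatching n).Adj p q := by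
    rintro ⟨i, _ | _⟩ ⟨j, _ | _⟩
    · exact iff_of_false (fun h ↦ hAB' (e j).2 (hA_adj _ (e i).2 _ h)) fun h ↦ h.2 rfl
    · change Γ.Adj (e i) (σ (e j)) ↔ i ≠ j ∧ false ≠ true
      simpa using hcross i j
    · change Γ.Adj (σ (e i)) (e j) ↔ i ≠ j ∧ true ≠ false
      simpa [Γ.adj_comm, ne_comm] using hcross j i
    · exact iff_of_false (fun h ↦ hAB' (hB_adj _ (hσB _) _ h) (hσB _)) fun h ↦ h.2 rfl
  have hF_inj : F.Injective := by
    rintro ⟨i, _ | _⟩ ⟨j, _ | _⟩ h <;> simp only [F, cond_false, cond_true] at h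
    · rw [e.injective (Subtype.ext h)]
    · exact (hAB' (e i).2 (h ▸ hσB (e j))).elim
    · exact (hAB' (e j).2 (h ▸ hσB (e i))).elim
    · rw [e.injective (hσ_unique _ _ h)]
  have hF_surj : F.Surjective := by
    intro y
    rcases hcover y with hy | hy
    · exact ⟨(e.symm ⟨y, hy⟩, false), by simp [F]⟩
    · obtain ⟨a, ⟨ha, hay⟩, -⟩ := hmatchB y hy
      refine ⟨(e.symm ⟨a, ha⟩, true), ?_⟩
      simpa [F] using (hmatchA a ha).unique ⟨hσB ⟨a, ha⟩, hσ ⟨a, ha⟩⟩ ⟨hy, hay⟩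
  exact ⟨(⟨Equiv.ofBijective F ⟨hF_inj, hF_surj⟩, hF_adj _ _⟩ : KnnMinusMatching n ≃g Γ).symm⟩

theorem nonempty_iso_knnMinusMatching_of_bipartite [DecidableEq V] {n : ℕ}
    (hconn : Γ.Preconnected) {A B : Finset V} (hAB : Disjoint A B) (hA : #A = n) (hA₀ : A.Nonempty)
    (hA_adj : ∀ a ∈ A, ∀ y, Γ.Adj a y → y ∈ B) (hB_adj : ∀ b ∈ B, ∀ y, Γ.Adj b y → y ∈ A)
    (hmatchA : ∀ a ∈ A, ∃! b ∈ B, ¬ Γ.Adj a b) (hmatchB : ∀ b ∈ B, ∃! a ∈ A, ¬ Γ.Adj a b) :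
    Nonempty (Γ ≃g KnnMinusMatching n) := by
  refine nonempty_iso_knnMinusMatching_of_partition ?_ hAB hA hA_adj hB_adj hmatchA hmatchB
  obtain ⟨a, ha⟩ := hA₀
  refine hconn.mem_of_adj_closed (s := {y | y ∈ A ∨ y ∈ B}) ?_ (Or.inl ha)
  rintro x y (hx | hx) hxy
  exacts [Or.inr (hA_adj x hx y hxy), Or.inl (hB_adj x hx y hxy)]

theorem dist_eq_two_iff {u v : V} :
    Γ.dist u v = 2 ↔ u ≠ v ∧ ¬ Γ.Adj u v ∧ (Γ.commonNeighbors u v).Nonempty := by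
  rw [dist, ENat.toNat_eq_iff two_ne_zero]
  exact edist_eq_two_iff

noncomputable def sphereFinset [Fintype V] (Γ : SimpleGraph V) (u : V) (n : ℕ) : Finset V :=
  {v | Γ.dist u v = n}

@[simp]
theorem mem_sphereFinset [Fintype V] {u v : V} {n : ℕ} :
    v ∈ Γ.sphereFinset u n ↔ Γ.dist u v = n := by
  simp [sphereFinset]

structure IsRegularWithB₁C₂ (Γ : SimpleGraph V) (k : ℕ) : Prop where
  ncard_neighborSet : ∀ v, (Γ.neighborSet v).ncard = k
  b₁_eq : ∀ u v, Γ.Adj u v → {w | Γ.Adj v w ∧ Γ.dist u w = 2}.ncard = k - 1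
  c₂_eq : ∀ u w, Γ.dist u w = 2 → (Γ.neighborSet u ∩ Γ.neighborSet w).ncard = k - 1

namespace IsRegularWithB₁C₂

variable [Fintype V] [DecidableRel Γ.Adj] {k : ℕ} {u v w : V}

theorem degree_eq (hΓ : Γ.IsRegularWithB₁C₂ k) (v : V) : Γ.degree v = k := by
  rw [← card_neighborFinset_eq_degree, neighborFinset_def, ← Set.ncard_eq_toFinset_card',
    hΓ.ncard_neighborSet]

theorem card_filter_neighborFinset (hΓ : Γ.IsRegularWithB₁C₂ k) (h : Γ.Adj u v) :
    #{w ∈ Γ.neighborFinset v | Γ.dist u w = 2} = k - 1 := by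
  rw [← hΓ.b₁_eq u v h, ← Set.ncard_coe_finset]
  congr
  ext
  simp

theorem card_inter_neighborFinset [DecidableEq V] (hΓ : Γ.IsRegularWithB₁C₂ k)
    (h : Γ.dist u w = 2) : #(Γ.neighborFinset u ∩ Γ.neighborFinset w) = k - 1 := by
  rw [← hΓ.c₂_eq u w h, ← Set.ncard_coe_finset]
  simp

variable [DecidableEq V]

theorem dist_eq_two_of_adj_of_adj (hΓ : Γ.IsRegularWithB₁C₂ k) {a b c : V} (hab : Γ.Adj a b)
    (hbc : Γ.Adj b c) (hac : a ≠ c) : Γ.dist a c = 2 := by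
  have hsub : {w ∈ Γ.neighborFinset b | Γ.dist a w = 2} ⊆ (Γ.neighborFinset b).erase a :=
    fun w hw ↦ by
      rw [mem_filter] at hw
      exact mem_erase.mpr ⟨by rintro rfl; simp at hw, hw.1⟩
  have heq := eq_of_subset_of_card_le hsub <| by
    rw [hΓ.card_filter_neighborFinset hab, card_erase_of_mem (by simpa using hab.symm),
      card_neighborFinset_eq_degree, hΓ.degree_eq]
  have hc : c ∈ (Γ.neighborFinset b).erase a := mem_erase.mpr ⟨hac.symm, by simpa using hbc⟩
  rw [← heq, mem_filter] at hc
  exact hc.2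

theorem card_sphereFinset_two (hΓ : Γ.IsRegularWithB₁C₂ k) (hk : 2 ≤ k) (u : V) :
    #(Γ.sphereFinset u 2) = k := by
  have hcount := card_mul_eq_card_mul Γ.Adj (s := Γ.neighborFinset u) (t := Γ.sphereFinset u 2)
    (m := k - 1) (n := k - 1)
    (fun w hw ↦ by
      rw [← hΓ.card_filter_neighborFinset ((mem_neighborFinset ..).mp hw)]
      congr 1
      ext
      simp [bipartiteAbove, and_comm])
    (fun v hv ↦ by
      rw [← hΓ.card_inter_neighborFinset (mem_sphereFinset.mp hv)]
      congr 1
      ext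
      simp [bipartiteBelow, adj_comm])
  rw [card_neighborFinset_eq_degree, hΓ.degree_eq] at hcount
  exact (Nat.eq_of_mul_eq_mul_right (by omega) hcount).symm

theorem existsUnique_not_adj (hΓ : Γ.IsRegularWithB₁C₂ k) (h : Γ.dist u v = 2) :
    ∃! w ∈ Γ.neighborFinset u, ¬ Γ.Adj v w := by
  have hinter := hΓ.card_inter_neighborFinset h
  have hk : 0 < k - 1 := by
    obtain ⟨w, hw⟩ := (dist_eq_two_iff.mp h).2.2
    rw [← hinter, card_pos]
    exact ⟨w, by simpa [mem_commonNeighbors] using hw⟩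
  refine existsUnique_not_of_card_filter_add_one ?_
  rw [card_neighborFinset_eq_degree, hΓ.degree_eq, ← Nat.sub_add_cancel (by omega : 1 ≤ k),
    ← hinter]
  congr 2
  ext
  simp

theorem existsUnique_not_adj_of_adj (hΓ : Γ.IsRegularWithB₁C₂ k) (hk : 2 ≤ k)
    (h : Γ.Adj u w) : ∃! v ∈ Γ.sphereFinset u 2, ¬ Γ.Adj v w := by
  refine existsUnique_not_of_card_filter_add_one ?_
  rw [hΓ.card_sphereFinset_two hk, ← Nat.sub_add_cancel (by omega : 1 ≤ k),
    ← hΓ.card_filter_neighborFinset h]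
  congr 2
  ext
  simp [adj_comm, and_comm]

theorem exists_adj_adj_of_dist_eq_two (hΓ : Γ.IsRegularWithB₁C₂ k) (hk : 3 ≤ k) {v v' : V}
    (hv : Γ.dist u v = 2) (hv' : Γ.dist u v' = 2) : ∃ w, Γ.Adj v w ∧ Γ.Adj w v' := by
  obtain ⟨w, hw⟩ := inter_nonempty_of_card_lt_card_add_card
      (t := Γ.neighborFinset u ∩ Γ.neighborFinset v) (u := Γ.neighborFinset u ∩ Γ.neighborFinset v')
      inter_subset_left inter_subset_left <| by
    rw [hΓ.card_inter_neighborFinset hv, hΓ.card_inter_neighborFinset hv',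
      card_neighborFinset_eq_degree, hΓ.degree_eq]
    omega
  simp only [mem_inter, mem_neighborFinset] at hw
  exact ⟨w, hw.1.2, hw.2.2.symm⟩

theorem exists_adj_adj_not_adj (hΓ : Γ.IsRegularWithB₁C₂ k) (hk : 3 ≤ k) {v v' : V}
    (hv : Γ.dist u v = 2) (hv' : Γ.dist u v' = 2) (hne : v ≠ v') :
    ∃ y, Γ.Adj v y ∧ Γ.Adj v' y ∧ ¬ Γ.Adj u y := by
  obtain ⟨w, hvw, hwv'⟩ := hΓ.exists_adj_adj_of_dist_eq_two hk hv hv'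
  obtain ⟨m, ⟨hm, hvm⟩, -⟩ := hΓ.existsUnique_not_adj hv
  obtain ⟨m', ⟨hm', hv'm'⟩, -⟩ := hΓ.existsUnique_not_adj hv'
  have hmm' : m ≠ m' := fun h ↦ hne <|
    (hΓ.existsUnique_not_adj_of_adj (by omega) (by simpa using hm)).unique
      ⟨by simpa using hv, hvm⟩ ⟨by simpa using hv', h ▸ hv'm'⟩
  obtain ⟨y, hy, hy'⟩ := exists_mem_notMem_of_card_lt_card
    (s := ((Γ.neighborFinset u).erase m).erase m')
    (t := Γ.neighborFinset v ∩ Γ.neighborFinset v') <| by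
      rw [card_erase_of_mem (mem_erase.mpr ⟨hmm'.symm, hm'⟩), card_erase_of_mem hm,
        card_neighborFinset_eq_degree, hΓ.degree_eq,
        hΓ.card_inter_neighborFinset (hΓ.dist_eq_two_of_adj_of_adj hvw hwv' hne)]
      omega
  simp only [mem_inter, mem_neighborFinset] at hy
  refine ⟨y, hy.1, hy.2, fun huy ↦ hy' ?_⟩
  refine mem_erase.mpr ⟨?_, mem_erase.mpr ⟨?_, by simpa using huy⟩⟩
  · rintro rfl; exact hv'm' hy.2
  · rintro rfl; exact hvm hy.1

theorem exists_neighborFinset_eq_sphereFinset_two (hΓ : Γ.IsRegularWithB₁C₂ k) (hk : 3 ≤ k)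
    (u : V) : ∃ x, x ≠ u ∧ ¬ Γ.Adj u x ∧ Γ.neighborFinset x = Γ.sphereFinset u 2 := by
  obtain ⟨v₀, hv₀⟩ : (Γ.sphereFinset u 2).Nonempty := by
    rw [← card_pos, hΓ.card_sphereFinset_two (by omega)]
    omega
  rw [mem_sphereFinset] at hv₀
  obtain ⟨x, ⟨hv₀x, hux⟩, hx_unique⟩ := hΓ.existsUnique_not_adj (Γ.dist_comm.trans hv₀)
  rw [mem_neighborFinset] at hv₀x
  have hx : ∀ v, Γ.dist u v = 2 → Γ.Adj v x := fun v hv ↦ by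
    obtain rfl | hne := eq_or_ne v v₀
    · exact hv₀x
    obtain ⟨y, hvy, hv₀y, huy⟩ := hΓ.exists_adj_adj_not_adj hk hv hv₀ hne
    rwa [← hx_unique y ⟨by simpa using hv₀y, huy⟩]
  refine ⟨x, ?_, hux, (eq_of_subset_of_card_le (fun v hv ↦ ?_) ?_).symm⟩
  · rintro rfl
    exact (dist_eq_two_iff.mp hv₀).2.1 hv₀x.symm
  · simpa [adj_comm] using hx v (mem_sphereFinset.mp hv)
  · rw [hΓ.card_sphereFinset_two (by omega), card_neighborFinset_eq_degree, hΓ.degree_eq]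

theorem nonempty_iso_knnMinusMatching (hΓ : Γ.IsRegularWithB₁C₂ k) (hk : 3 ≤ k)
    (hconn : Γ.Connected) : Nonempty (Γ ≃g KnnMinusMatching (k + 1)) := by
  obtain ⟨u⟩ := hconn.nonempty
  obtain ⟨x, hxu, hux, hNx⟩ := hΓ.exists_neighborFinset_eq_sphereFinset_two hk u
  set S₁ := Γ.neighborFinset u
  set S₂ := Γ.sphereFinset u 2
  have hS₁ : ∀ {w}, w ∈ S₁ ↔ Γ.Adj u w := mem_neighborFinset ..
  have hS₂ : ∀ {v}, v ∈ S₂ ↔ Γ.Adj x v := by simp [← hNx]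
  have hS₂_dist : ∀ {v}, v ∈ S₂ → Γ.dist u v = 2 := mem_sphereFinset.mp
  apply nonempty_iso_knnMinusMatching_of_bipartite hconn.preconnected
    (A := insert u S₂) (B := insert x S₁)
  · rw [disjoint_insert_left, disjoint_insert_right, mem_insert, not_or, Finset.disjoint_left]
    exact ⟨⟨hxu.symm, by simp [S₁]⟩, fun h ↦ Γ.irrefl (hS₂.mp h),
      fun v hv hv₁ ↦ (dist_eq_two_iff.mp (hS₂_dist hv)).2.1 (hS₁.mp hv₁)⟩
  · rw [card_insert_of_notMem (by simp [S₂]), hΓ.card_sphereFinset_two (by omega)]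
  · exact insert_nonempty u S₂
  · rw [forall_mem_insert]
    refine ⟨fun y hy ↦ mem_insert_of_mem (hS₁.mpr hy), fun v hv y hvy ↦ ?_⟩
    by_cases huy : Γ.Adj u y
    · exact mem_insert_of_mem (hS₁.mpr huy)
    · rw [(hΓ.existsUnique_not_adj (Γ.dist_comm.trans (hS₂_dist hv))).unique
        ⟨by simpa using hvy, huy⟩ ⟨by simpa [adj_comm] using hS₂.mp hv, hux⟩]
      exact mem_insert_self x S₁
  · rw [forall_mem_insert]
    refine ⟨fun y hy ↦ mem_insert_of_mem (hS₂.mpr hy), fun w hw y hwy ↦ ?_⟩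
    obtain rfl | hyu := eq_or_ne y u
    · exact mem_insert_self y S₂
    · exact mem_insert_of_mem <| mem_sphereFinset.mpr <|
        hΓ.dist_eq_two_of_adj_of_adj (hS₁.mp hw) hwy hyu.symm
  · rw [forall_mem_insert]
    exact ⟨existsUnique_mem_insert_of_forall_not hux fun w hw ↦ not_not.mpr (hS₁.mp hw),
      fun v hv ↦ existsUnique_mem_insert_of_not (not_not.mpr (hS₂.mp hv).symm)
        (hΓ.existsUnique_not_adj (hS₂_dist hv))⟩
  · rw [forall_mem_insert]
    exact ⟨existsUnique_mem_insert_of_forall_not hux fun v hv ↦ not_not.mpr (hS₂.mp hv).symm,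
      fun w hw ↦ existsUnique_mem_insert_of_not (not_not.mpr (hS₁.mp hw))
        (hΓ.existsUnique_not_adj_of_adj (by omega) (hS₁.mp hw))⟩

end IsRegularWithB₁C₂

end SimpleGraph

theorem stmt12_general {V : Type*} [Fintype V] (Γ : SimpleGraph V) (k : ℕ) (hk : 3 ≤ k)
    (hconn : Γ.Connected)
    (hreg : ∀ v, (Γ.neighborSet v).ncard = k)
    (hb₁ : ∀ u v, Γ.Adj u v → {w | Γ.Adj v w ∧ Γ.dist u w = 2}.ncard = k - 1)
    (hc₂ : ∀ u w, Γ.dist u w = 2 → (Γ.neighborSet u ∩ Γ.neighborSet w).ncard = k - 1) :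
    Nonempty (Γ ≃g KnnMinusMatching (k + 1)) := by
  classical
  exact SimpleGraph.IsRegularWithB₁C₂.nonempty_iso_knnMinusMatching ⟨hreg, hb₁, hc₂⟩ hk hconn

/-- A connected 2-distance-transitive graph of valency `k ≥ 3`, diameter
`≥ 3`, with `b₁ = c₂ = k - 1`, is isomorphic to `K_{k+1,k+1}` minus a perfect matching. -/
theorem stmt12 {V : Type*} [Fintype V] (Γ : SimpleGraph V) (k : ℕ) (hk : 3 ≤ k)
    (hconn : Γ.Connected)
    (hreg : ∀ v, (Γ.neighborSet v).ncard = k)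
    (h2dt : TwoDistanceTransitive Γ)
    (hdiam : ∃ u v, 3 ≤ Γ.dist u v)
    (hb₁ : ∀ u v, Γ.Adj u v → {w | Γ.Adj v w ∧ Γ.dist u w = 2}.ncard = k - 1)
    (hc₂ : ∀ u w, Γ.dist u w = 2 → (Γ.neighborSet u ∩ Γ.neighborSet w).ncard = k - 1) :
    Nonempty (Γ ≃g KnnMinusMatching (k + 1)) :=
  stmt12_general Γ k hk hconn hreg hb₁ hc₂
end
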